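/- Let μ be a finite positive measure on ℝ such that x ↦ x^n is μ-integrable for every n ≥ 0, and set s_n = ∫ x^n dμ(x). If the Hankel determinant D_k equals 0 for some k ≥ 0, then there exists a nonzero polynomial Q of degree at most k such that μ is concentrated on the zero set of Q (i.e. μ({x : Q(x) ≠ 0}) = 0); in particular μ is a discrete measure with at most k mass points. -/

import Mathlib

/-!
If `H v = 0` for the Hankel matrix `H` of the moments of `μ`, then for the polynomial
`Q = ∑ vᵢ Xⁱ` one has `∫ Q² dμ = v ⬝ H v = 0`; as `Q² ≥ 0`, `Q` vanishes `μ`-almost everywhere.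
-/

open MeasureTheory Polynomial Matrix

namespace Matrix

def hankel {R : Type*} (s : ℕ → R) (n : ℕ) : Matrix (Fin n) (Fin n) R :=
  of fun i j => s (i + j)

theorem dotProduct_hankel_mulVec {R : Type*} [CommSemiring R] (s : ℕ → R) {n : ℕ}
    (v : Fin n → R) : v ⬝ᵥ (hankel s n *ᵥ v) = ∑ i, ∑ j, v i * v j * s (i + j) := by
  simp only [dotProduct, mulVec, hankel, of_apply, Finset.mul_sum]
  exact Finset.sum_congr rfl fun i _ => Finset.sum_congr rfl fun j _ => by ring

end Matrix

theorem sq_sum_mul_pow {R : Type*} [CommSemiring R] {n : ℕ} (v : Fin n → R) (x : R) :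
    (∑ i, v i * x ^ (i : ℕ)) ^ 2 = ∑ i, ∑ j, v i * v j * x ^ (i + j : ℕ) := by
  rw [sq, Finset.sum_mul_sum]
  exact Finset.sum_congr rfl fun i _ => Finset.sum_congr rfl fun j _ => by ring

section Moments

variable {μ : Measure ℝ} (hint : ∀ m : ℕ, Integrable (fun x : ℝ => x ^ m) μ)
include hint

theorem integrable_sq_sum_mul_pow {n : ℕ} (v : Fin n → ℝ) :
    Integrable (fun x => (∑ i, v i * x ^ (i : ℕ)) ^ 2) μ := by
  simp_rw [sq_sum_mul_pow]
  exact integrable_finsetSum _ fun i _ => integrable_finsetSum _ fun j _ =>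
    (hint _).const_mul _

theorem integral_sq_sum_mul_pow {n : ℕ} (v : Fin n → ℝ) :
    ∫ x, (∑ i, v i * x ^ (i : ℕ)) ^ 2 ∂μ =
      v ⬝ᵥ (hankel (fun m => ∫ x, x ^ m ∂μ) n *ᵥ v) := by
  simp_rw [dotProduct_hankel_mulVec, sq_sum_mul_pow, ← integral_const_mul]
  rw [integral_finsetSum _ fun i _ => integrable_finsetSum _ fun j _ => (hint _).const_mul _]
  exact Finset.sum_congr rfl fun i _ => integral_finsetSum _ fun j _ => (hint _).const_mul _

theorem ae_sum_mul_pow_eq_zero_of_hankel_mulVec_eq_zero {n : ℕ} {v : Fin n → ℝ}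
    (hv : hankel (fun m => ∫ x, x ^ m ∂μ) n *ᵥ v = 0) :
    ∀ᵐ x ∂μ, ∑ i, v i * x ^ (i : ℕ) = 0 := by
  have hsq : (fun x => (∑ i, v i * x ^ (i : ℕ)) ^ 2) =ᵐ[μ] 0 := by
    refine (integral_eq_zero_iff_of_nonneg (fun x => sq_nonneg _)
      (integrable_sq_sum_mul_pow hint v)).1 ?_
    rw [integral_sq_sum_mul_pow hint, hv, dotProduct_zero]
  filter_upwards [hsq] with x hx
  exact pow_eq_zero_iff two_ne_zero |>.1 hx

end Moments

theorem measure_concentrated_of_hankel_det_eq_zero_general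
    (μ : Measure ℝ)
    (hint : ∀ n : ℕ, Integrable (fun x : ℝ => x ^ n) μ)
    (s : ℕ → ℝ) (hs : ∀ n : ℕ, s n = ∫ x, x ^ n ∂μ)
    (k : ℕ) (hD : (Matrix.of fun i j : Fin (k + 1) => s (i.1 + j.1)).det = 0) :
    ∃ Q : Polynomial ℝ, Q ≠ 0 ∧ Q.degree ≤ k ∧ μ {x : ℝ | Q.eval x ≠ 0} = 0 := by
  obtain rfl : s = fun n => ∫ x, x ^ n ∂μ := funext hs
  obtain ⟨v, hv0, hv⟩ := exists_mulVec_eq_zero_iff.2 hD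
  set Q := (degreeLTEquiv ℝ (k + 1)).symm v
  refine ⟨Q, ?_, ?_, ?_⟩
  · simpa [Q] using hv0
  · exact mem_degreeLE.1 (degreeLT_succ_eq_degreeLE (R := ℝ) ▸ Q.2)
  · have heval : ∀ x, (Q : ℝ[X]).eval x = ∑ i, v i * x ^ (i : ℕ) := fun x => by
      rw [eval_eq_sum_degreeLTEquiv Q.2, Subtype.coe_eta, LinearEquiv.apply_symm_apply]
    simpa only [heval, ae_iff] using
      ae_sum_mul_pow_eq_zero_of_hankel_mulVec_eq_zero hint hv

/-- If a finite positive measure on `ℝ` has all moments and some Hankel determinant of its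
moment sequence vanishes, say `D k = 0`, then the measure is concentrated on the zero set of
a nonzero polynomial of degree at most `k`; in particular it is a discrete measure with at
most `k` mass points. -/
theorem measure_concentrated_of_hankel_det_eq_zero
    (μ : Measure ℝ) [IsFiniteMeasure μ]
    (hint : ∀ n : ℕ, Integrable (fun x : ℝ => x ^ n) μ)
    (s : ℕ → ℝ) (hs : ∀ n : ℕ, s n = ∫ x, x ^ n ∂μ)
    (k : ℕ) (hD : (Matrix.of fun i j : Fin (k + 1) => s (i.1 + j.1)).det = 0) :
    ∃ Q : Polynomial ℝ, Q ≠ 0 ∧ Q.degree ≤ k ∧ μ {x : ℝ | Q.eval x ≠ 0} = 0 :=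
  measure_concentrated_of_hankel_det_eq_zero_general μ hint s hs k hD
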